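/- arXiv:math/0604367 — 5 statements merged into one kernel-verified Lean document; each statement's English description precedes it below -/
import Mathlib

section
/- Let k ≥ 2 be an integer and B > 0. If x = (x_1,…,x_k) and y = (y_1,…,y_k) are two vectors with all entries in [−B, B] that differ in exactly one coordinate, then |s²(x) − s²(y)| ≤ 4B²/k, where s²(x) = (k−1)^{-1} Σ_{i=1}^k (x_i − x̄)² is the unbiased sample variance and x̄ = k^{-1} Σ_{i=1}^k x_i is the sample mean. -/
lemma var_pair (k : ℕ) (hk : 2 ≤ k) (x : Fin k → ℝ) :
    ((k : ℝ) - 1)⁻¹ * ∑ i, (x i - (k : ℝ)⁻¹ * ∑ l, x l) ^ 2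
      = (2 * k * ((k : ℝ) - 1))⁻¹ * ∑ i, ∑ j, (x i - x j) ^ 2 := by
  have hk0 : (k : ℝ) ≠ 0 := by positivity
  have hk1 : (k : ℝ) - 1 ≠ 0 := by
    have : (2:ℝ) ≤ k := by exact_mod_cast hk
    linarith
  set S := ∑ l, x l with hS
  set Q := ∑ l, (x l) ^ 2 with hQ
  have h1 : ∑ i, (x i - (k : ℝ)⁻¹ * S) ^ 2 = Q - (k:ℝ)⁻¹ * S ^ 2 := by
    have : ∑ i, (x i - (k : ℝ)⁻¹ * S) ^ 2
        = ∑ i, ((x i)^2 - 2 * ((k:ℝ)⁻¹ * S) * x i + ((k:ℝ)⁻¹*S)^2) := by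
      apply Finset.sum_congr rfl; intro i _; ring
    rw [this, Finset.sum_add_distrib, Finset.sum_sub_distrib, ← Finset.mul_sum,
      Finset.sum_const, Finset.card_univ, Fintype.card_fin, nsmul_eq_mul]
    field_simp
    ring
  have h2 : ∑ i, ∑ j, (x i - x j) ^ 2 = 2 * k * Q - 2 * S ^ 2 := by
    have : ∀ i, ∑ j, (x i - x j) ^ 2
        = (k:ℝ) * (x i)^2 - 2 * x i * S + Q := by
      intro i
      have : ∑ j, (x i - x j) ^ 2 = ∑ j, ((x i)^2 - 2 * x i * x j + (x j)^2) := by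
        apply Finset.sum_congr rfl; intro j _; ring
      rw [this, Finset.sum_add_distrib, Finset.sum_sub_distrib, ← Finset.mul_sum,
        Finset.sum_const, Finset.card_univ, Fintype.card_fin, nsmul_eq_mul, ← hS, ← hQ]
    rw [Finset.sum_congr rfl fun i _ => this i, Finset.sum_add_distrib,
      Finset.sum_sub_distrib, ← Finset.mul_sum, ← Finset.sum_mul,
      Finset.sum_const, Finset.card_univ, Fintype.card_fin, nsmul_eq_mul]
    have h2x : ∑ i, 2 * x i = 2 * S := by rw [← Finset.mul_sum]
    rw [h2x, ← hQ]
    ring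
  rw [h1, h2]
  field_simp

/-- Lipschitz property of the unbiased sample variance.
If two vectors `x, y ∈ [−B,B]^k` differ in exactly one coordinate, then the
unbiased sample variances differ by at most `4B²/k`. -/
theorem sample_variance_lipschitz (k : ℕ) (hk : 2 ≤ k) (B : ℝ) (hB : 0 < B)
    (x y : Fin k → ℝ)
    (hx : ∀ i, x i ∈ Set.Icc (-B) B) (hy : ∀ i, y i ∈ Set.Icc (-B) B)
    (hxy : ∃! i, x i ≠ y i) :
    |((k : ℝ) - 1)⁻¹ * ∑ i, (x i - (k : ℝ)⁻¹ * ∑ l, x l) ^ 2 -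
        ((k : ℝ) - 1)⁻¹ * ∑ i, (y i - (k : ℝ)⁻¹ * ∑ l, y l) ^ 2|
      ≤ 4 * B ^ 2 / k := by
  obtain ⟨i₀, hne, huniq⟩ := hxy
  have hxyj : ∀ j, j ≠ i₀ → x j = y j := by
    intro j hj
    by_contra hc
    exact hj (huniq j hc)
  have hk0 : (0:ℝ) < k := by positivity
  have hk1 : (0:ℝ) < (k:ℝ) - 1 := by
    have : (2:ℝ) ≤ k := by exact_mod_cast hk
    linarith
  set d : Fin k → Fin k → ℝ := fun i j => (x i - x j)^2 - (y i - y j)^2 with hd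
  have hdbound : ∀ i j, |d i j| ≤ 4 * B ^ 2 := by
    intro i j
    obtain ⟨a1, a2⟩ := hx i; obtain ⟨a3, a4⟩ := hx j
    obtain ⟨b1, b2⟩ := hy i; obtain ⟨b3, b4⟩ := hy j
    rw [abs_sub_le_iff]
    constructor <;> nlinarith
  have hdzero : ∀ i j, i ≠ i₀ → j ≠ i₀ → d i j = 0 := by
    intro i j hi hj
    simp [hd, hxyj i hi, hxyj j hj]
  rw [var_pair k hk x, var_pair k hk y, ← mul_sub, ← Finset.sum_sub_distrib]
  have hsum : ∀ i, ∑ j, (x i - x j)^2 - ∑ j, (y i - y j)^2 = ∑ j, d i j := by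
    intro i; rw [← Finset.sum_sub_distrib]
  rw [Finset.sum_congr rfl fun i _ => hsum i]
  -- split the outer sum
  have hsplit : ∑ i, ∑ j, d i j
      = (∑ j ∈ Finset.univ.erase i₀, d i₀ j) + ∑ i ∈ Finset.univ.erase i₀, d i i₀ := by
    rw [← Finset.add_sum_erase _ _ (Finset.mem_univ i₀)]
    congr 1
    · rw [← Finset.add_sum_erase _ _ (Finset.mem_univ i₀)]
      simp [hd]
    · apply Finset.sum_congr rfl
      intro i hi
      rw [Finset.mem_erase] at hi
      rw [Finset.sum_eq_single i₀]
      · intro j _ hj; exact hdzero i j hi.1 hj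
      · intro h; exact absurd (Finset.mem_univ i₀) h
  rw [hsplit]
  have hcard : ((Finset.univ.erase i₀).card : ℝ) = (k:ℝ) - 1 := by
    rw [Finset.card_erase_of_mem (Finset.mem_univ i₀), Finset.card_univ, Fintype.card_fin]
    have : 1 ≤ k := by omega
    push_cast [Nat.cast_sub this]
    ring
  have hb1 : |∑ j ∈ Finset.univ.erase i₀, d i₀ j| ≤ ((k:ℝ) - 1) * (4 * B^2) := by
    calc |∑ j ∈ Finset.univ.erase i₀, d i₀ j| ≤ ∑ j ∈ Finset.univ.erase i₀, |d i₀ j| :=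
          Finset.abs_sum_le_sum_abs _ _
      _ ≤ ∑ j ∈ Finset.univ.erase i₀, (4 * B^2) :=
          Finset.sum_le_sum fun j _ => hdbound i₀ j
      _ = ((k:ℝ) - 1) * (4 * B^2) := by rw [Finset.sum_const, nsmul_eq_mul, hcard]
  have hb2 : |∑ i ∈ Finset.univ.erase i₀, d i i₀| ≤ ((k:ℝ) - 1) * (4 * B^2) := by
    calc |∑ i ∈ Finset.univ.erase i₀, d i i₀| ≤ ∑ i ∈ Finset.univ.erase i₀, |d i i₀| :=
          Finset.abs_sum_le_sum_abs _ _
      _ ≤ ∑ i ∈ Finset.univ.erase i₀, (4 * B^2) :=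
          Finset.sum_le_sum fun i _ => hdbound i i₀
      _ = ((k:ℝ) - 1) * (4 * B^2) := by rw [Finset.sum_const, nsmul_eq_mul, hcard]
  have hc : (0:ℝ) < 2 * k * ((k:ℝ) - 1) := by positivity
  rw [abs_mul, abs_of_pos (inv_pos.mpr hc)]
  have habs : |∑ j ∈ Finset.univ.erase i₀, d i₀ j + ∑ i ∈ Finset.univ.erase i₀, d i i₀|
      ≤ 2 * (((k:ℝ) - 1) * (4 * B^2)) := by
    calc _ ≤ |∑ j ∈ Finset.univ.erase i₀, d i₀ j| + |∑ i ∈ Finset.univ.erase i₀, d i i₀| :=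
          abs_add_le _ _
      _ ≤ _ := by linarith
  calc (2 * k * ((k:ℝ) - 1))⁻¹ * |∑ j ∈ Finset.univ.erase i₀, d i₀ j + ∑ i ∈ Finset.univ.erase i₀, d i i₀|
      ≤ (2 * k * ((k:ℝ) - 1))⁻¹ * (2 * (((k:ℝ) - 1) * (4 * B^2))) := by
        apply mul_le_mul_of_nonneg_left habs (le_of_lt (inv_pos.mpr hc))
    _ = 4 * B ^ 2 / k := by field_simp
end

section
/- Let k ≥ 2 be an integer, M > 0, and let A and B be disjoint finite sets with |A ∪ B| = m. For an array d : (A ∪ B) × {1,…,k} → [0, M], define v_i(d) = Σ_{e∈A} d(e,i) − Σ_{e∈B} d(e,i) for 1 ≤ i ≤ k, and f(d) = s²(v_1(d),…,v_k(d)), the unbiased sample variance of the v_i(d). If two arrays d and d′ with values in [0, M] agree in all but one entry (e, i), then |f(d) − f(d′)| ≤ 4m²M²/k. -/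
lemma var_expand (k : ℕ) (hk : (k:ℝ) ≠ 0) (w : Fin k → ℝ) :
    ∑ i, (w i - (k : ℝ)⁻¹ * ∑ l, w l) ^ 2
      = (∑ i, (w i) ^ 2) - (k : ℝ)⁻¹ * (∑ l, w l) ^ 2 := by
  have h1 : ∑ i, (w i - (k : ℝ)⁻¹ * ∑ l, w l) ^ 2
      = ∑ i, ((w i)^2 - 2 * (k:ℝ)⁻¹ * (∑ l, w l) * w i
          + (k:ℝ)⁻¹ ^ 2 * (∑ l, w l) ^ 2) := by
    apply Finset.sum_congr rfl; intro i _; ring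
  rw [h1, Finset.sum_add_distrib, Finset.sum_sub_distrib, ← Finset.mul_sum,
    Finset.sum_const, Finset.card_univ, Fintype.card_fin, nsmul_eq_mul]
  field_simp
  ring

/-- Lipschitz property of the sample variance of delay differences,
as a function of the individual edge delay samples.  The `m` edges of the path
are split into the two arms `A` and `B`; `v i d = Σ_{e∈A} d e i − Σ_{e∈B} d e i`
and `f d` is the unbiased sample variance of `(v 1 d, …, v k d)`. -/
theorem delay_sample_variance_lipschitz {E : Type*} [DecidableEq E]
    (k : ℕ) (hk : 2 ≤ k) (M : ℝ) (hM : 0 < M)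
    (A B : Finset E) (hAB : Disjoint A B) (m : ℕ) (hm : (A ∪ B).card = m)
    (d d' : E → Fin k → ℝ)
    (hd : ∀ e ∈ A ∪ B, ∀ i, d e i ∈ Set.Icc (0 : ℝ) M)
    (hd' : ∀ e ∈ A ∪ B, ∀ i, d' e i ∈ Set.Icc (0 : ℝ) M)
    (e₀ : E) (he₀ : e₀ ∈ A ∪ B) (i₀ : Fin k)
    (hagree : ∀ e ∈ A ∪ B, ∀ i : Fin k, ¬(e = e₀ ∧ i = i₀) → d e i = d' e i) :
    |((k : ℝ) - 1)⁻¹ * ∑ i, ((∑ e ∈ A, d e i - ∑ e ∈ B, d e i) -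
          (k : ℝ)⁻¹ * ∑ l, (∑ e ∈ A, d e l - ∑ e ∈ B, d e l)) ^ 2 -
        ((k : ℝ) - 1)⁻¹ * ∑ i, ((∑ e ∈ A, d' e i - ∑ e ∈ B, d' e i) -
          (k : ℝ)⁻¹ * ∑ l, (∑ e ∈ A, d' e l - ∑ e ∈ B, d' e l)) ^ 2|
      ≤ 4 * (m : ℝ) ^ 2 * M ^ 2 / k := by
  have hk2 : (2:ℝ) ≤ (k:ℝ) := by exact_mod_cast hk
  have hkpos : (0:ℝ) < k := by linarith
  have hkne : (k:ℝ) ≠ 0 := ne_of_gt hkpos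
  have hk1 : (0:ℝ) < (k:ℝ) - 1 := by linarith
  set v : Fin k → ℝ := fun i => ∑ e ∈ A, d e i - ∑ e ∈ B, d e i with hv
  set v' : Fin k → ℝ := fun i => ∑ e ∈ A, d' e i - ∑ e ∈ B, d' e i with hv'
  -- bounds on cards
  have hm1 : 1 ≤ m := by
    rw [← hm]; exact Finset.card_pos.mpr ⟨e₀, he₀⟩
  have hAm : A.card ≤ m := by
    rw [← hm]; exact Finset.card_le_card Finset.subset_union_left
  have hBm : B.card ≤ m := by
    rw [← hm]; exact Finset.card_le_card Finset.subset_union_right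
  -- pointwise bounds on v, v'
  have hbound : ∀ (w : E → Fin k → ℝ),
      (∀ e ∈ A ∪ B, ∀ i, w e i ∈ Set.Icc (0:ℝ) M) →
      ∀ i, |∑ e ∈ A, w e i - ∑ e ∈ B, w e i| ≤ m * M := by
    intro w hw i
    have hA0 : (0:ℝ) ≤ ∑ e ∈ A, w e i :=
      Finset.sum_nonneg fun e he => (hw e (Finset.mem_union_left _ he) i).1
    have hB0 : (0:ℝ) ≤ ∑ e ∈ B, w e i :=
      Finset.sum_nonneg fun e he => (hw e (Finset.mem_union_right _ he) i).1
    have hAM : ∑ e ∈ A, w e i ≤ A.card * M := by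
      calc ∑ e ∈ A, w e i ≤ ∑ _e ∈ A, M :=
            Finset.sum_le_sum fun e he => (hw e (Finset.mem_union_left _ he) i).2
        _ = A.card * M := by rw [Finset.sum_const, nsmul_eq_mul]
    have hBM : ∑ e ∈ B, w e i ≤ B.card * M := by
      calc ∑ e ∈ B, w e i ≤ ∑ _e ∈ B, M :=
            Finset.sum_le_sum fun e he => (hw e (Finset.mem_union_right _ he) i).2
        _ = B.card * M := by rw [Finset.sum_const, nsmul_eq_mul]
    have hAm' : (A.card : ℝ) * M ≤ m * M :=
      mul_le_mul_of_nonneg_right (by exact_mod_cast hAm) hM.le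
    have hBm' : (B.card : ℝ) * M ≤ m * M :=
      mul_le_mul_of_nonneg_right (by exact_mod_cast hBm) hM.le
    rw [abs_le]; constructor <;> linarith
  have hva : ∀ i, |v i| ≤ m * M := hbound d hd
  have hva' : ∀ i, |v' i| ≤ m * M := hbound d' hd'
  -- v and v' agree off i₀
  have heq : ∀ l, l ≠ i₀ → v l = v' l := by
    intro l hl
    simp only [hv, hv']
    have h1 : ∀ e ∈ A, d e l = d' e l := fun e he =>
      hagree e (Finset.mem_union_left _ he) l (by tauto)
    have h2 : ∀ e ∈ B, d e l = d' e l := fun e he =>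
      hagree e (Finset.mem_union_right _ he) l (by tauto)
    rw [Finset.sum_congr rfl h1, Finset.sum_congr rfl h2]
  -- |v i₀ - v' i₀| ≤ M
  have hδ : |v i₀ - v' i₀| ≤ M := by
    have hdd' : ∀ e ∈ A ∪ B, e ≠ e₀ → d e i₀ = d' e i₀ := fun e he hne =>
      hagree e he i₀ (by tauto)
    have key : v i₀ - v' i₀ = (∑ e ∈ A, (d e i₀ - d' e i₀))
        - ∑ e ∈ B, (d e i₀ - d' e i₀) := by
      simp only [hv, hv', Finset.sum_sub_distrib]; ring
    have hM' : |d e₀ i₀ - d' e₀ i₀| ≤ M := by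
      have h1 := hd e₀ he₀ i₀
      have h2 := hd' e₀ he₀ i₀
      rw [abs_le]
      constructor <;> [linarith [h1.1, h2.2]; linarith [h1.2, h2.1]]
    rcases Finset.mem_union.mp he₀ with hA | hB
    · have hBz : ∑ e ∈ B, (d e i₀ - d' e i₀) = 0 := by
        apply Finset.sum_eq_zero; intro e he
        have hne : e ≠ e₀ := by
          intro h; exact Finset.disjoint_left.mp hAB hA (h ▸ he)
        rw [hdd' e (Finset.mem_union_right _ he) hne]; ring
      have hAz : ∑ e ∈ A, (d e i₀ - d' e i₀) = d e₀ i₀ - d' e₀ i₀ := by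
        apply Finset.sum_eq_single_of_mem e₀ hA
        intro e he hne
        rw [hdd' e (Finset.mem_union_left _ he) hne]; ring
      rw [key, hBz, hAz, sub_zero]; exact hM'
    · have hAz : ∑ e ∈ A, (d e i₀ - d' e i₀) = 0 := by
        apply Finset.sum_eq_zero; intro e he
        have hne : e ≠ e₀ := by
          intro h; exact Finset.disjoint_right.mp hAB hB (h ▸ he)
        rw [hdd' e (Finset.mem_union_left _ he) hne]; ring
      have hBz : ∑ e ∈ B, (d e i₀ - d' e i₀) = d e₀ i₀ - d' e₀ i₀ := by
        apply Finset.sum_eq_single_of_mem e₀ hB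
        intro e he hne
        rw [hdd' e (Finset.mem_union_right _ he) hne]; ring
      rw [key, hAz, hBz, zero_sub, abs_neg]; exact hM'
  -- reduce the goal to a statement about v, v'
  show |((k:ℝ)-1)⁻¹ * ∑ i, (v i - (k:ℝ)⁻¹ * ∑ l, v l)^2
      - ((k:ℝ)-1)⁻¹ * ∑ i, (v' i - (k:ℝ)⁻¹ * ∑ l, v' l)^2| ≤ 4*(m:ℝ)^2*M^2/k
  set a := v i₀ with ha
  set a' := v' i₀ with ha'
  set S := ∑ l ∈ ({i₀}ᶜ : Finset (Fin k)), v l with hSdef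
  have hS' : ∑ l ∈ ({i₀}ᶜ : Finset (Fin k)), v' l = S := by
    apply Finset.sum_congr rfl; intro l hl
    exact (heq l (by simpa using hl)).symm
  have hT : ∑ l, v l = a + S := Fintype.sum_eq_add_sum_compl i₀ v
  have hT' : ∑ l, v' l = a' + S := by
    rw [Fintype.sum_eq_add_sum_compl i₀ v', hS']
  have hsq : (∑ i, (v i)^2) - ∑ i, (v' i)^2 = a^2 - a'^2 := by
    rw [Fintype.sum_eq_add_sum_compl i₀ (fun i => (v i)^2),
        Fintype.sum_eq_add_sum_compl i₀ (fun i => (v' i)^2)]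
    have hc : ∑ l ∈ ({i₀}ᶜ : Finset (Fin k)), (v l)^2
        = ∑ l ∈ ({i₀}ᶜ : Finset (Fin k)), (v' l)^2 := by
      apply Finset.sum_congr rfl; intro l hl
      rw [heq l (by simpa using hl)]
    rw [hc]; ring
  have hmain : ((k:ℝ)-1)⁻¹ * ∑ i, (v i - (k:ℝ)⁻¹ * ∑ l, v l)^2
      - ((k:ℝ)-1)⁻¹ * ∑ i, (v' i - (k:ℝ)⁻¹ * ∑ l, v' l)^2
      = ((k:ℝ)-1)⁻¹ * ((a - a') * ((a + a') * (1 - (k:ℝ)⁻¹) - 2 * (k:ℝ)⁻¹ * S)) := by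
    rw [var_expand k hkne v, var_expand k hkne v', hT, hT']
    linear_combination (((k:ℝ)-1)⁻¹) * hsq
  rw [hmain, abs_mul, abs_mul, abs_of_pos (inv_pos.mpr hk1)]
  -- bounds
  have hSb : |S| ≤ ((k:ℝ)-1) * (m * M) := by
    have h1 : |S| ≤ ∑ l ∈ ({i₀}ᶜ : Finset (Fin k)), |v l| :=
      Finset.abs_sum_le_sum_abs _ _
    have h2 : ∑ l ∈ ({i₀}ᶜ : Finset (Fin k)), |v l|
        ≤ ({i₀}ᶜ : Finset (Fin k)).card • ((m:ℝ) * M) :=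
      Finset.sum_le_card_nsmul _ _ _ fun l _ => hva l
    have h3 : ({i₀}ᶜ : Finset (Fin k)).card = k - 1 := by
      simp [Finset.card_compl]
    have h4 : ((k - 1 : ℕ) : ℝ) = (k:ℝ) - 1 := by
      have : 1 ≤ k := by omega
      push_cast [this]; ring
    calc |S| ≤ ({i₀}ᶜ : Finset (Fin k)).card • ((m:ℝ) * M) := h1.trans h2
      _ = ((k:ℝ)-1) * (m * M) := by rw [h3, nsmul_eq_mul, h4]
  have hkinv : (0:ℝ) ≤ 1 - (k:ℝ)⁻¹ := by
    have : (k:ℝ)⁻¹ ≤ 1 := by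
      rw [inv_le_one_iff₀]; right; linarith
    linarith
  have hbr : |(a + a') * (1 - (k:ℝ)⁻¹) - 2 * (k:ℝ)⁻¹ * S|
      ≤ 2*(m:ℝ)*M * (1 - (k:ℝ)⁻¹) + 2 * (k:ℝ)⁻¹ * (((k:ℝ)-1) * (m * M)) := by
    have h1 : |(a + a') * (1 - (k:ℝ)⁻¹) - 2 * (k:ℝ)⁻¹ * S|
        ≤ |(a + a') * (1 - (k:ℝ)⁻¹)| + |2 * (k:ℝ)⁻¹ * S| := abs_sub _ _
    have h2 : |(a + a') * (1 - (k:ℝ)⁻¹)| ≤ 2*(m:ℝ)*M * (1 - (k:ℝ)⁻¹) := by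
      rw [abs_mul, abs_of_nonneg hkinv]
      apply mul_le_mul_of_nonneg_right _ hkinv
      calc |a + a'| ≤ |a| + |a'| := abs_add_le _ _
        _ ≤ 2*(m:ℝ)*M := by have := hva i₀; have := hva' i₀; linarith
    have h3 : |2 * (k:ℝ)⁻¹ * S| ≤ 2 * (k:ℝ)⁻¹ * (((k:ℝ)-1) * (m * M)) := by
      rw [abs_mul, abs_of_nonneg (by positivity : (0:ℝ) ≤ 2 * (k:ℝ)⁻¹)]
      exact mul_le_mul_of_nonneg_left hSb (by positivity)
    linarith
  have hstep : ((k:ℝ)-1)⁻¹ * (|a - a'| * |(a + a') * (1 - (k:ℝ)⁻¹) - 2 * (k:ℝ)⁻¹ * S|)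
      ≤ ((k:ℝ)-1)⁻¹ * (M * (2*(m:ℝ)*M * (1 - (k:ℝ)⁻¹) + 2 * (k:ℝ)⁻¹ * (((k:ℝ)-1) * (m * M)))) := by
    apply mul_le_mul_of_nonneg_left _ (inv_pos.mpr hk1).le
    exact mul_le_mul hδ hbr (abs_nonneg _) hM.le
  refine hstep.trans ?_
  have heq2 : ((k:ℝ)-1)⁻¹ * (M * (2*(m:ℝ)*M * (1 - (k:ℝ)⁻¹) + 2 * (k:ℝ)⁻¹ * (((k:ℝ)-1) * (m * M))))
      = 4*(m:ℝ)*M^2/k := by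
    field_simp
    ring
  rw [heq2]
  have hmm : (m:ℝ) ≤ (m:ℝ)^2 := by
    have h1 : (1:ℝ) ≤ (m:ℝ) := by exact_mod_cast hm1
    nlinarith
  gcongr
end

section
/- Let T be a finite tree with edge weight function w : E(T) → ℝ, and for vertices a, b let W(a,b) = Σ_{e ∈ P_{ab}} w(e) be the sum of weights along the unique path from a to b (with W(a,a) = 0). Let e = {p, q} be an edge of T. Suppose u₁ and u₂ are vertices lying in the connected component of T − e containing p, such that the paths from u₁ to p and from u₂ to p share no edge; and suppose u₃ and u₄ are vertices in the component of T − e containing q, such that the paths from u₃ to q and from u₄ to q share no edge. Then w(e) = ½ (W(u₁,u₃) + W(u₂,u₄) − W(u₁,u₂) − W(u₃,u₄)). -/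
open SimpleGraph Walk

section Aux
variable {V : Type*} {G : SimpleGraph V} [DecidableEq V]

lemma my_isPath_of_isTrail (hG : G.IsAcyclic) :
    ∀ {u v : V} (p : G.Walk u v), p.IsTrail → p.IsPath := by
  intro u v p
  induction p with
  | nil => intro _; exact Walk.IsPath.nil
  | @cons a b c h p ih =>
    intro ht
    rw [Walk.isTrail_cons] at ht
    have hp := ih ht.1
    rw [Walk.cons_isPath_iff]
    refine ⟨hp, fun hmem => ?_⟩
    have hc : (Walk.cons h (p.takeUntil a hmem)).IsCycle :=
      SimpleGraph.Path.cons_isCycle ⟨_, hp.takeUntil hmem⟩ h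
        (fun he => ht.2 (Walk.edges_takeUntil_subset p hmem he))
    exact hG _ hc
end Aux

/-- Four-point identity for additive functions on a tree (internal
edge case).  Here `W(a,b)` is realized as the sum of the weights over the edges
of the (unique) path between `a` and `b`; `u₁, u₂` lie in the component of
`T − e` containing `p` with edge-disjoint paths to `p`, and `u₃, u₄` in the
component containing `q` with edge-disjoint paths to `q`. -/
theorem four_point_internal_edge {V : Type*} [Fintype V] [DecidableEq V]
    (G : SimpleGraph V) (hG : G.IsTree) (w : Sym2 V → ℝ)
    (p q : V) (hpq : G.Adj p q)
    (u₁ u₂ u₃ u₄ : V)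
    (q₁ : (G.deleteEdges {s(p, q)}).Walk u₁ p) (hq₁ : q₁.IsPath)
    (q₂ : (G.deleteEdges {s(p, q)}).Walk u₂ p) (hq₂ : q₂.IsPath)
    (h₁₂ : q₁.edges.Disjoint q₂.edges)
    (q₃ : (G.deleteEdges {s(p, q)}).Walk u₃ q) (hq₃ : q₃.IsPath)
    (q₄ : (G.deleteEdges {s(p, q)}).Walk u₄ q) (hq₄ : q₄.IsPath)
    (h₃₄ : q₃.edges.Disjoint q₄.edges)
    (p₁₃ : G.Walk u₁ u₃) (hp₁₃ : p₁₃.IsPath)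
    (p₂₄ : G.Walk u₂ u₄) (hp₂₄ : p₂₄.IsPath)
    (p₁₂ : G.Walk u₁ u₂) (hp₁₂ : p₁₂.IsPath)
    (p₃₄ : G.Walk u₃ u₄) (hp₃₄ : p₃₄.IsPath) :
    w s(p, q) = (1 / 2) * ((p₁₃.edges.map w).sum + (p₂₄.edges.map w).sum
      - (p₁₂.edges.map w).sum - (p₃₄.edges.map w).sum) := by
  classical
  have hacyc : G.IsAcyclic := hG.IsAcyclic
  -- the edge is a bridge
  have hbridge : ¬ (G.deleteEdges {s(p, q)}).Reachable p q := by
    have := (SimpleGraph.isAcyclic_iff_forall_adj_isBridge.mp hacyc) hpq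
    rw [SimpleGraph.isBridge_iff] at this
    exact this
  -- generic facts
  have hsub : ∀ {x y : V} (r : (G.deleteEdges {s(p, q)}).Walk x y), ∀ f ∈ r.edges, f ∈ G.edgeSet := by
    intro x y r f hf
    have := r.edges_subset_edgeSet hf
    rw [SimpleGraph.edgeSet_deleteEdges] at this
    exact this.1
  have hnot : ∀ {x y : V} (r : (G.deleteEdges {s(p, q)}).Walk x y), s(p, q) ∉ r.edges := by
    intro x y r hf
    have := r.edges_subset_edgeSet hf
    rw [SimpleGraph.edgeSet_deleteEdges] at this
    exact this.2 rfl
  -- vertices on a walk are reachable to the endpoint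
  have hreach : ∀ {x y a : V} (r : (G.deleteEdges {s(p, q)}).Walk x y), a ∈ r.support → (G.deleteEdges {s(p, q)}).Reachable a y := by
    intro x y a r ha
    exact ⟨r.dropUntil a ha⟩
  -- cross edge-disjointness
  have hcross : ∀ {x y : V} (r : (G.deleteEdges {s(p, q)}).Walk x p) (s : (G.deleteEdges {s(p, q)}).Walk y q), r.edges.Disjoint s.edges := by
    intro x y r s f hfr hfs
    induction f with
    | h a b =>
      have h1 : a ∈ r.support := Walk.fst_mem_support_of_mem_edges r hfr
      have h2 : a ∈ s.support := Walk.fst_mem_support_of_mem_edges s hfs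
      exact hbridge ((hreach r h1).symm.trans (hreach s h2))
  -- the combined cross walk
  have cross : ∀ {x y : V} (r : (G.deleteEdges {s(p, q)}).Walk x p) (s : (G.deleteEdges {s(p, q)}).Walk y q), r.IsPath → s.IsPath →
      ∃ t : G.Walk x y, t.IsPath ∧ t.edges = r.edges ++ (s(p, q) :: s.edges.reverse) := by
    intro x y r s hr hs
    have hrs : r.edges.Disjoint s.edges := hcross r s
    refine ⟨(r.transfer G (hsub r)).append (Walk.cons hpq (s.transfer G (hsub s)).reverse), ?_, ?_⟩
    · apply my_isPath_of_isTrail hacyc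
      constructor
      simp only [Walk.edges_append, Walk.edges_cons, Walk.edges_reverse, Walk.edges_transfer]
      rw [List.nodup_append]
      refine ⟨hr.isTrail.edges_nodup, ?_, ?_⟩
      · rw [List.nodup_cons]
        refine ⟨?_, by simpa using hs.isTrail.edges_nodup⟩
        rw [List.mem_reverse]
        exact hnot s
      · intro f hf
        intro b hb hfb
        subst hfb
        rw [List.mem_cons, List.mem_reverse] at hb
        rcases hb with h | h
        · exact hnot r (h ▸ hf)
        · exact hrs hf h
    · simp [Walk.edges_append, Walk.edges_cons, Walk.edges_reverse, Walk.edges_transfer]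
  -- the combined same-side walk
  have same : ∀ {x y z : V} (r : (G.deleteEdges {s(p, q)}).Walk x z) (s : (G.deleteEdges {s(p, q)}).Walk y z), r.IsPath → s.IsPath →
      r.edges.Disjoint s.edges →
      ∃ t : G.Walk x y, t.IsPath ∧ t.edges = r.edges ++ s.edges.reverse := by
    intro x y z r s hr hs hrs
    refine ⟨(r.transfer G (hsub r)).append (s.transfer G (hsub s)).reverse, ?_, ?_⟩
    · apply my_isPath_of_isTrail hacyc
      constructor
      simp only [Walk.edges_append, Walk.edges_reverse, Walk.edges_transfer]
      rw [List.nodup_append]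
      exact ⟨hr.isTrail.edges_nodup, by simpa using hs.isTrail.edges_nodup,
        fun f hf g hg hfg => hrs hf (List.mem_reverse.mp (by subst hfg; exact hg))⟩
    · simp [Walk.edges_append, Walk.edges_reverse, Walk.edges_transfer]
  obtain ⟨t₁₃, ht₁₃, he₁₃⟩ := cross q₁ q₃ hq₁ hq₃
  obtain ⟨t₂₄, ht₂₄, he₂₄⟩ := cross q₂ q₄ hq₂ hq₄
  obtain ⟨t₁₂, ht₁₂, he₁₂⟩ := same q₁ q₂ hq₁ hq₂ h₁₂
  obtain ⟨t₃₄, ht₃₄, he₃₄⟩ := same q₃ q₄ hq₃ hq₄ h₃₄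
  have e13 : p₁₃.edges = t₁₃.edges := by
    have := hacyc.path_unique ⟨p₁₃, hp₁₃⟩ ⟨t₁₃, ht₁₃⟩
    exact congrArg (fun x => (Subtype.val x).edges) this
  have e24 : p₂₄.edges = t₂₄.edges := by
    have := hacyc.path_unique ⟨p₂₄, hp₂₄⟩ ⟨t₂₄, ht₂₄⟩
    exact congrArg (fun x => (Subtype.val x).edges) this
  have e12 : p₁₂.edges = t₁₂.edges := by
    have := hacyc.path_unique ⟨p₁₂, hp₁₂⟩ ⟨t₁₂, ht₁₂⟩
    exact congrArg (fun x => (Subtype.val x).edges) this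
  have e34 : p₃₄.edges = t₃₄.edges := by
    have := hacyc.path_unique ⟨p₃₄, hp₃₄⟩ ⟨t₃₄, ht₃₄⟩
    exact congrArg (fun x => (Subtype.val x).edges) this
  rw [e13, e24, e12, e34, he₁₃, he₂₄, he₁₂, he₃₄]
  simp only [List.map_append, List.sum_append, List.map_cons, List.sum_cons, List.map_reverse,
    List.sum_reverse]
  ring
end

section
/- Fix an integer j ≥ 2 and M ≥ 1. There exists a constant C″ > 0 depending only on j and M such that the following holds. Let Δ ≥ 1 and k ≥ 2 be integers with k ≥ Δ², let A and B be disjoint finite sets with |A ∪ B| ≤ 2Δ, and let {d_{e,i} : e ∈ A ∪ B, 1 ≤ i ≤ k} be jointly independent random variables taking values in [0, M], with d_{e,1},…,d_{e,k} identically distributed for each e. Set V_i = Σ_{e∈A} d_{e,i} − Σ_{e∈B} d_{e,i}, V̄ = k^{-1} Σ_i V_i, δ̂ = k^{-1} Σ_i (V_i − V̄)^j, and δ = E[(V_1 − E[V_1])^j]. Then |E[δ̂] − δ| ≤ C″ M^{2j} Δ^{j+1} / √k. -/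
open MeasureTheory ProbabilityTheory

lemma aux_abs_pow_sub_pow (L : ℝ) (hL : 0 ≤ L) :
    ∀ (n : ℕ) (a b : ℝ), |a| ≤ L → |b| ≤ L →
      |a ^ n - b ^ n| ≤ n * L ^ (n - 1) * |a - b| := by
  intro n
  induction n with
  | zero => intro a b _ _; simp
  | succ n ih =>
    intro a b ha hb
    have key : a ^ (n + 1) - b ^ (n + 1) = a * (a ^ n - b ^ n) + b ^ n * (a - b) := by ring
    have h1 : |a ^ (n + 1) - b ^ (n + 1)| ≤ |a| * |a ^ n - b ^ n| + |b| ^ n * |a - b| := by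
      rw [key]
      refine (abs_add_le _ _).trans ?_
      rw [abs_mul, abs_mul, abs_pow]
    have h2 : |a| * |a ^ n - b ^ n| ≤ L * (n * L ^ (n - 1) * |a - b|) :=
      mul_le_mul ha (ih a b ha hb) (abs_nonneg _) hL
    have h3 : |b| ^ n * |a - b| ≤ L ^ n * |a - b| :=
      mul_le_mul_of_nonneg_right (pow_le_pow_left₀ (abs_nonneg _) hb n) (abs_nonneg _)
    have h4 : L * (n * L ^ (n - 1) * |a - b|) ≤ n * L ^ n * |a - b| := by
      cases n with
      | zero => simp
      | succ m =>
        have : L * L ^ (m + 1 - 1) = L ^ (m + 1) := by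
          simp [pow_succ]; ring
        calc L * ((m + 1 : ℕ) * L ^ (m + 1 - 1) * |a - b|)
            = (m + 1 : ℕ) * (L * L ^ (m + 1 - 1)) * |a - b| := by ring
          _ = (m + 1 : ℕ) * L ^ (m + 1) * |a - b| := by rw [this]
          _ ≤ (m + 1 : ℕ) * L ^ (m + 1) * |a - b| := le_refl _
    calc |a ^ (n + 1) - b ^ (n + 1)| ≤ L * (n * L ^ (n - 1) * |a - b|) + L ^ n * |a - b| :=
          h1.trans (add_le_add h2 h3)
      _ ≤ n * L ^ n * |a - b| + L ^ n * |a - b| := add_le_add h4 (le_refl _)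
      _ = (n + 1 : ℕ) * L ^ (n + 1 - 1) * |a - b| := by push_cast; try ring

lemma aux_indepFun_sum_sum {ι Ω : Type*} [MeasurableSpace Ω] {μ : Measure Ω}
    {f : ι → Ω → ℝ} (hf : iIndepFun f μ)
    (hmeas : ∀ i, Measurable (f i)) {S T : Finset ι} (hST : Disjoint S T) :
    IndepFun (fun ω => ∑ i ∈ S, f i ω) (fun ω => ∑ i ∈ T, f i ω) μ := by
  have h := hf.indepFun_finset S T hST hmeas
  have hgS : Measurable (fun x : S → ℝ => ∑ i ∈ S.attach, x i) :=
    Finset.measurable_sum _ (fun i _ => measurable_pi_apply i)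
  have hgT : Measurable (fun x : T → ℝ => ∑ i ∈ T.attach, x i) :=
    Finset.measurable_sum _ (fun i _ => measurable_pi_apply i)
  have h2 := h.comp hgS hgT
  have eS : (fun x : S → ℝ => ∑ i ∈ S.attach, x i) ∘ (fun a (i : S) => f i a)
      = fun ω => ∑ i ∈ S, f i ω := by
    funext ω
    simp only [Function.comp_apply]
    exact Finset.sum_attach S fun i => f i ω
  have eT : (fun x : T → ℝ => ∑ i ∈ T.attach, x i) ∘ (fun a (i : T) => f i a)
      = fun ω => ∑ i ∈ T, f i ω := by
    funext ω
    simp only [Function.comp_apply]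
    exact Finset.sum_attach T fun i => f i ω
  rwa [eS, eT] at h2

lemma aux_identDistrib_add {Ω Ω' : Type*} [MeasurableSpace Ω] [MeasurableSpace Ω']
    {μ : Measure Ω} {μ' : Measure Ω'} [IsFiniteMeasure μ] [IsFiniteMeasure μ']
    {X Y : Ω → ℝ} {X' Y' : Ω' → ℝ} (hX : Measurable X) (hY : Measurable Y)
    (hX' : Measurable X') (hY' : Measurable Y')
    (hindep : IndepFun X Y μ) (hindep' : IndepFun X' Y' μ')
    (h1 : IdentDistrib X X' μ μ') (h2 : IdentDistrib Y Y' μ μ') :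
    IdentDistrib (fun ω => X ω + Y ω) (fun ω => X' ω + Y' ω) μ μ' := by
  have hp : IdentDistrib (fun ω => (X ω, Y ω)) (fun ω => (X' ω, Y' ω)) μ μ' := by
    refine ⟨(hX.prodMk hY).aemeasurable, (hX'.prodMk hY').aemeasurable, ?_⟩
    rw [(indepFun_iff_map_prod_eq_prod_map_map hX.aemeasurable hY.aemeasurable).1 hindep,
      (indepFun_iff_map_prod_eq_prod_map_map hX'.aemeasurable hY'.aemeasurable).1 hindep',
      h1.map_eq, h2.map_eq]
  exact hp.comp measurable_add

lemma aux_integrable_of_bdd {Ω : Type*} [MeasurableSpace Ω] {μ : Measure Ω}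
    [IsFiniteMeasure μ] {f : Ω → ℝ} (hf : Measurable f) {C : ℝ} (h : ∀ ω, |f ω| ≤ C) :
    Integrable f μ :=
  (integrable_const C).mono' hf.aestronglyMeasurable
    (Filter.Eventually.of_forall (fun ω => by simpa [Real.norm_eq_abs] using h ω))

lemma aux_arith (R sk k : ℝ) (hR : 0 < R) (hsk : 0 < sk) (hk : sk * sk = k) :
    ((2 * R) ^ 2 / k) / (2 * (2 * R / sk)) + (2 * R / sk) / 2 = 2 * R / sk := by
  subst hk; field_simp; ring

set_option maxHeartbeats 2000000 in
/-- Bias bound for the plug-in estimator of the `j`-th central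
moment of the delay difference: if `k ≥ Δ²`, then
`|E[δ̂] − δ| ≤ C″ M^{2j} Δ^{j+1} / √k` with `C″` depending only on `j` and `M`,
where `δ̂ = k⁻¹ Σ_i (V_i − V̄)^j` and `δ = E[(V₁ − E V₁)^j]`. -/
theorem delta_hat_bias_bound (j : ℕ) (hj : 2 ≤ j) (M : ℝ) (hM : 1 ≤ M) :
    ∃ C'' : ℝ, 0 < C'' ∧
      ∀ (Δ k : ℕ) (hΔ : 1 ≤ Δ) (hk : 2 ≤ k) (hkΔ : Δ ^ 2 ≤ k),
      ∀ (E : Type) (_ : DecidableEq E) (A B : Finset E),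
        Disjoint A B → (A ∪ B).card ≤ 2 * Δ →
      ∀ (Ω : Type) [MeasureSpace Ω], IsProbabilityMeasure (ℙ : Measure Ω) →
      ∀ (d : E → Fin k → Ω → ℝ),
        (∀ e i, Measurable (d e i)) →
        (∀ e ∈ A ∪ B, ∀ (i : Fin k) (ω : Ω), d e i ω ∈ Set.Icc (0 : ℝ) M) →
        iIndepFun
          (fun p : ((A ∪ B : Finset E) × Fin k) => d p.1.1 p.2) ℙ →
        (∀ e ∈ A ∪ B, ∀ i i' : Fin k, IdentDistrib (d e i) (d e i') ℙ ℙ) →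
        let V : Fin k → Ω → ℝ := fun i ω => ∑ e ∈ A, d e i ω - ∑ e ∈ B, d e i ω
        let dhat : Ω → ℝ := fun ω =>
          (k : ℝ)⁻¹ * ∑ i, (V i ω - (k : ℝ)⁻¹ * ∑ i', V i' ω) ^ j
        let δ : ℝ := ∫ ω, (V ⟨0, by omega⟩ ω - ∫ ω', V ⟨0, by omega⟩ ω') ^ j
        |(∫ ω, dhat ω) - δ| ≤ C'' * M ^ (2 * j) * (Δ : ℝ) ^ (j + 1) / Real.sqrt k := by
  classical
  refine ⟨(j + 1) * 4 ^ j, by positivity, ?_⟩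
  intro Δ k hΔ hk hkΔ E _instE A B hAB hcard Ω _instΩ hprob d hdmeas hdmem hindep hident
  haveI := hprob
  intro V dhat δ
  -- basic numbers
  have hM0 : (0 : ℝ) < M := lt_of_lt_of_le one_pos hM
  have hΔ1 : (1 : ℝ) ≤ (Δ : ℝ) := by exact_mod_cast hΔ
  have hk0 : (0 : ℝ) < (k : ℝ) := by
    have : 0 < k := by omega
    exact_mod_cast this
  have hkne : ((k : ℝ)) ≠ 0 := ne_of_gt hk0
  set R : ℝ := 2 * (Δ : ℝ) * M with hRdef
  have hR : (0 : ℝ) < R := by nlinarith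
  -- the signed family
  set c : E → ℝ := fun e => if e ∈ A then (1 : ℝ) else -1 with hc
  set f : ((A ∪ B : Finset E) × Fin k) → Ω → ℝ :=
    fun p ω => c p.1.1 * d p.1.1 p.2 ω with hf
  have hfmeas : ∀ p, Measurable (f p) := fun p => (hdmeas _ _).const_mul _
  have hfindep : iIndepFun f ℙ :=
    hindep.comp (fun p (x : ℝ) => c p.1.1 * x) (fun p => measurable_id.const_mul _)
  have hcabs : ∀ e : E, |c e| = 1 := by
    intro e
    by_cases he : e ∈ A <;> simp [hc, he]
  have hfbd : ∀ p ω, |f p ω| ≤ M := by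
    intro p ω
    have hmem := hdmem p.1.1 p.1.2 p.2 ω
    have : |d p.1.1 p.2 ω| ≤ M := abs_le.2 ⟨by linarith [hmem.1, hM0.le], hmem.2⟩
    calc |f p ω| = |c p.1.1| * |d p.1.1 p.2 ω| := abs_mul _ _
      _ = |d p.1.1 p.2 ω| := by rw [hcabs]; ring
      _ ≤ M := this
  -- V as a sum of the signed family
  have hVeq : ∀ i : Fin k, V i = fun ω => ∑ e : (A ∪ B : Finset E), f (e, i) ω := by
    intro i
    funext ω
    show (∑ e ∈ A, d e i ω) - ∑ e ∈ B, d e i ω = _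
    have h1 : ∑ e : (A ∪ B : Finset E), f (e, i) ω
        = ∑ e ∈ A ∪ B, c e * d e i ω := by
      rw [← Finset.sum_attach (A ∪ B) (fun e => c e * d e i ω)]
      rfl
    rw [h1, Finset.sum_union hAB]
    have h2 : ∑ e ∈ A, c e * d e i ω = ∑ e ∈ A, d e i ω := by
      refine Finset.sum_congr rfl fun e he => ?_
      simp [hc, he]
    have h3 : ∑ e ∈ B, c e * d e i ω = -∑ e ∈ B, d e i ω := by
      rw [← Finset.sum_neg_distrib]
      refine Finset.sum_congr rfl fun e he => ?_
      have : e ∉ A := fun hea => (Finset.disjoint_left.1 hAB) hea he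
      simp [hc, this]
    rw [h2, h3]
    ring
  have hVmeas : ∀ i, Measurable (V i) := by
    intro i
    rw [hVeq i]
    exact Finset.measurable_sum _ fun e _ => hfmeas (e, i)
  have hcardU : (Fintype.card (A ∪ B : Finset E) : ℝ) ≤ 2 * (Δ : ℝ) := by
    rw [Fintype.card_coe]
    exact_mod_cast hcard
  have hVbd : ∀ (i : Fin k) (ω : Ω), |V i ω| ≤ R := by
    intro i ω
    rw [hVeq i]
    calc |∑ e : (A ∪ B : Finset E), f (e, i) ω|
        ≤ ∑ e : (A ∪ B : Finset E), |f (e, i) ω| := Finset.abs_sum_le_sum_abs _ _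
      _ ≤ (Finset.univ.card : ℕ) • M :=
          Finset.sum_le_card_nsmul _ _ M fun e _ => hfbd (e, i) ω
      _ = (Fintype.card (A ∪ B : Finset E) : ℝ) * M := by
          rw [Finset.card_univ, nsmul_eq_mul]
      _ ≤ 2 * (Δ : ℝ) * M := mul_le_mul_of_nonneg_right hcardU hM0.le
  have hVint : ∀ i, Integrable (V i) ℙ := fun i =>
    aux_integrable_of_bdd (hVmeas i) (hVbd i)
  -- identical distribution of the V i
  have hSum_image : ∀ (l : Fin k) (S : Finset (A ∪ B : Finset E)) (ω : Ω),
      ∑ p ∈ S.image (fun e => (e, l)), f p ω = ∑ e ∈ S, f (e, l) ω := by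
    intro l S ω
    rw [Finset.sum_image]
    intro x _ y _ h
    exact (Prod.mk.injEq _ _ _ _ ▸ h).1
  have hVident : ∀ i i' : Fin k, IdentDistrib (V i) (V i') ℙ ℙ := by
    have hsum_ident : ∀ (i i' : Fin k) (S : Finset (A ∪ B : Finset E)),
        IdentDistrib (fun ω => ∑ e ∈ S, f (e, i) ω)
          (fun ω => ∑ e ∈ S, f (e, i') ω) ℙ ℙ := by
      intro i i' S
      induction S using Finset.induction_on with
      | empty =>
        simp only [Finset.sum_empty]
        exact IdentDistrib.refl aemeasurable_const
      | @insert a S haS ih =>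
        have hmS : ∀ l : Fin k, Measurable (fun ω => ∑ e ∈ S, f (e, l) ω) :=
          fun l => Finset.measurable_sum _ fun e _ => hfmeas (e, l)
        have hindepS : ∀ l : Fin k,
            IndepFun (f (a, l)) (fun ω => ∑ e ∈ S, f (e, l) ω) ℙ := by
          intro l
          have hd : Disjoint ({(a, l)} : Finset ((A ∪ B : Finset E) × Fin k))
              (S.image (fun e => (e, l))) := by
            simp only [Finset.disjoint_singleton_left, Finset.mem_image]
            rintro ⟨x, hx, hxe⟩
            have : x = a := (Prod.mk.injEq _ _ _ _ ▸ hxe).1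
            exact haS (this ▸ hx)
          have h := aux_indepFun_sum_sum hfindep hfmeas hd
          have e1 : (fun ω => ∑ p ∈ ({(a, l)} : Finset _), f p ω) = f (a, l) := by
            funext ω; simp
          have e2 : (fun ω => ∑ p ∈ S.image (fun e => (e, l)), f p ω)
              = fun ω => ∑ e ∈ S, f (e, l) ω := by
            funext ω; exact hSum_image l S ω
          rwa [e1, e2] at h
        have hident_a : IdentDistrib (f (a, i)) (f (a, i')) ℙ ℙ :=
          (hident a.1 a.2 i i').comp (measurable_id.const_mul (c a.1))
        have hmain := aux_identDistrib_add (hfmeas (a, i)) (hmS i) (hfmeas (a, i'))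
          (hmS i') (hindepS i) (hindepS i') hident_a ih
        have e3 : ∀ l : Fin k, (fun ω => ∑ e ∈ insert a S, f (e, l) ω)
            = fun ω => f (a, l) ω + ∑ e ∈ S, f (e, l) ω := by
          intro l; funext ω; exact Finset.sum_insert haS
        rw [e3 i, e3 i']
        exact hmain
    intro i i'
    rw [hVeq i, hVeq i']
    exact hsum_ident i i' Finset.univ
  -- pairwise independence of the V i
  have hVindep : ∀ i l : Fin k, i ≠ l → IndepFun (V i) (V l) ℙ := by
    intro i l hil
    have hd : Disjoint (Finset.univ.image (fun e : (A ∪ B : Finset E) => (e, i)))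
        (Finset.univ.image (fun e : (A ∪ B : Finset E) => (e, l))) := by
      simp only [Finset.disjoint_left, Finset.mem_image]
      rintro p ⟨x, _, rfl⟩ ⟨y, _, hy⟩
      exact hil ((Prod.mk.injEq _ _ _ _ ▸ hy).2).symm
    have h := aux_indepFun_sum_sum hfindep hfmeas hd
    have e1 : (fun ω => ∑ p ∈ Finset.univ.image
        (fun e : (A ∪ B : Finset E) => (e, i)), f p ω) = V i := by
      funext ω; rw [hSum_image i Finset.univ ω, hVeq i]
    have e2 : (fun ω => ∑ p ∈ Finset.univ.image
        (fun e : (A ∪ B : Finset E) => (e, l)), f p ω) = V l := by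
      funext ω; rw [hSum_image l Finset.univ ω, hVeq l]
    rwa [e1, e2] at h
  -- the mean
  set i0 : Fin k := ⟨0, by omega⟩ with hi0
  set μ0 : ℝ := ∫ ω, V i0 ω with hμ0
  have hVmean : ∀ i : Fin k, ∫ ω, V i ω = μ0 := fun i => (hVident i i0).integral_eq
  have hμ0bd : |μ0| ≤ R := by
    rw [hμ0]
    have := norm_integral_le_of_norm_le_const (μ := (ℙ : Measure Ω)) (C := R)
      (Filter.Eventually.of_forall fun ω => by
        rw [Real.norm_eq_abs]; exact hVbd i0 ω)
    simpa [Real.norm_eq_abs] using this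
  -- Vbar and W
  set Vbar : Ω → ℝ := fun ω => (k : ℝ)⁻¹ * ∑ i', V i' ω with hVbar
  have hVbarmeas : Measurable Vbar :=
    (Finset.measurable_sum _ fun i _ => hVmeas i).const_mul _
  have hVbarbd : ∀ ω, |Vbar ω| ≤ R := by
    intro ω
    rw [hVbar]
    have h1 : |∑ i', V i' ω| ≤ (k : ℝ) * R := by
      calc |∑ i', V i' ω| ≤ ∑ i' : Fin k, |V i' ω| := Finset.abs_sum_le_sum_abs _ _
        _ ≤ (Finset.univ.card : ℕ) • R := Finset.sum_le_card_nsmul _ _ R fun i _ => hVbd i ω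
        _ = (k : ℝ) * R := by rw [Finset.card_univ, Fintype.card_fin, nsmul_eq_mul]
    calc |(k : ℝ)⁻¹ * ∑ i', V i' ω| = (k : ℝ)⁻¹ * |∑ i', V i' ω| := by
          rw [abs_mul, abs_of_nonneg (inv_nonneg.2 hk0.le)]
      _ ≤ (k : ℝ)⁻¹ * ((k : ℝ) * R) := by
          exact mul_le_mul_of_nonneg_left h1 (inv_nonneg.2 hk0.le)
      _ = R := by field_simp
  set W : Ω → ℝ := fun ω => Vbar ω - μ0 with hW
  have hWmeas : Measurable W := hVbarmeas.sub_const _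
  have hWbd : ∀ ω, |W ω| ≤ 2 * R := by
    intro ω
    calc |W ω| ≤ |Vbar ω| + |μ0| := abs_sub _ _
      _ ≤ R + R := add_le_add (hVbarbd ω) hμ0bd
      _ = 2 * R := by ring
  -- centered variables
  set Y : Fin k → Ω → ℝ := fun i ω => V i ω - μ0 with hY
  have hYmeas : ∀ i, Measurable (Y i) := fun i => (hVmeas i).sub_const _
  have hYbd : ∀ i ω, |Y i ω| ≤ 2 * R := by
    intro i ω
    calc |Y i ω| ≤ |V i ω| + |μ0| := abs_sub _ _
      _ ≤ R + R := add_le_add (hVbd i ω) hμ0bd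
      _ = 2 * R := by ring
  have hYint : ∀ i, Integrable (Y i) ℙ := fun i => aux_integrable_of_bdd (hYmeas i) (hYbd i)
  have hYmean : ∀ i, ∫ ω, Y i ω = 0 := by
    intro i
    rw [hY]
    simp only
    rw [integral_sub (hVint i) (integrable_const _), hVmean i, integral_const]
    simp
  have hYprodint : ∀ i l, Integrable (fun ω => Y i ω * Y l ω) ℙ := by
    intro i l
    refine aux_integrable_of_bdd ((hYmeas i).mul (hYmeas l)) (C := (2 * R) ^ 2) fun ω => ?_
    rw [abs_mul, sq]
    exact mul_le_mul (hYbd i ω) (hYbd l ω) (abs_nonneg _) (by linarith)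
  -- second moment of W
  have hWsq : ∫ ω, W ω ^ 2 ≤ (2 * R) ^ 2 / k := by
    have hWY : ∀ ω, W ω = (k : ℝ)⁻¹ * ∑ i, Y i ω := by
      intro ω
      rw [hW, hY]
      simp only
      rw [Finset.sum_sub_distrib, Finset.sum_const, Finset.card_univ, Fintype.card_fin]
      rw [hVbar]
      field_simp
      try ring
    have hsq : ∀ ω, W ω ^ 2 = ((k : ℝ)⁻¹) ^ 2 * ∑ i, ∑ l, Y i ω * Y l ω := by
      intro ω
      rw [hWY ω, mul_pow, sq (∑ i, Y i ω), Finset.sum_mul_sum]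
    have hint1 : ∀ i : Fin k, Integrable (fun ω => ∑ l, Y i ω * Y l ω) ℙ :=
      fun i => integrable_finset_sum _ fun l _ => hYprodint i l
    have hintegral : ∫ ω, W ω ^ 2
        = ((k : ℝ)⁻¹) ^ 2 * ∑ i, ∑ l, ∫ ω, Y i ω * Y l ω := by
      rw [show (fun ω => W ω ^ 2) = fun ω => ((k : ℝ)⁻¹) ^ 2 * ∑ i, ∑ l, Y i ω * Y l ω
        from funext hsq]
      rw [integral_const_mul]
      congr 1
      rw [integral_finset_sum _ fun i _ => hint1 i]
      refine Finset.sum_congr rfl fun i _ => ?_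
      rw [integral_finset_sum _ fun l _ => hYprodint i l]
    have hterm : ∀ i l : Fin k, ∫ ω, Y i ω * Y l ω ≤ if i = l then (2 * R) ^ 2 else 0 := by
      intro i l
      by_cases hil : i = l
      · subst hil
        simp only [if_pos rfl]
        have hle : ∀ ω, Y i ω * Y i ω ≤ (2 * R) ^ 2 := by
          intro ω
          have := hYbd i ω
          nlinarith [abs_nonneg (Y i ω), sq_abs (Y i ω)]
        calc ∫ ω, Y i ω * Y i ω ≤ ∫ _ω, (2 * R) ^ 2 ∂(ℙ : Measure Ω) :=
              integral_mono (hYprodint i i) (integrable_const _) hle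
          _ = (2 * R) ^ 2 := by simp
      · simp only [if_neg hil]
        have hYindep : IndepFun (Y i) (Y l) ℙ :=
          (hVindep i l hil).comp (measurable_id.sub_const μ0) (measurable_id.sub_const μ0)
        have := hYindep.integral_fun_mul_eq_mul_integral (hYint i).1 (hYint l).1
        have heq : ∫ ω, Y i ω * Y l ω = (∫ ω, Y i ω) * ∫ ω, Y l ω := this
        rw [heq, hYmean i, hYmean l]
        simp
    calc ∫ ω, W ω ^ 2 = ((k : ℝ)⁻¹) ^ 2 * ∑ i, ∑ l, ∫ ω, Y i ω * Y l ω := hintegral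
      _ ≤ ((k : ℝ)⁻¹) ^ 2 * ∑ i : Fin k, ∑ l : Fin k, (if i = l then (2 * R) ^ 2 else 0) := by
          refine mul_le_mul_of_nonneg_left ?_ (by positivity)
          exact Finset.sum_le_sum fun i _ => Finset.sum_le_sum fun l _ => hterm i l
      _ = ((k : ℝ)⁻¹) ^ 2 * ((k : ℝ) * (2 * R) ^ 2) := by
          congr 1
          rw [Finset.sum_congr rfl fun i _ => Finset.sum_ite_eq Finset.univ i
            (fun _ => (2 * R) ^ 2)]
          simp [Finset.card_univ]
      _ = (2 * R) ^ 2 / k := by field_simp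
  -- first absolute moment of W
  have hWint : Integrable W ℙ := aux_integrable_of_bdd hWmeas hWbd
  have hWabsint : Integrable (fun ω => |W ω|) ℙ := hWint.abs
  have hWsqint : Integrable (fun ω => W ω ^ 2) ℙ := by
    refine aux_integrable_of_bdd (hWmeas.pow_const 2) (C := (2 * R) ^ 2) fun ω => ?_
    rw [abs_pow]
    exact pow_le_pow_left₀ (abs_nonneg _) (hWbd ω) 2
  have hsqrtk : (0 : ℝ) < Real.sqrt k := Real.sqrt_pos.2 hk0
  have hsqrtk2 : Real.sqrt k * Real.sqrt k = (k : ℝ) := Real.mul_self_sqrt hk0.le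
  set t : ℝ := 2 * R / Real.sqrt k with ht
  have ht0 : 0 < t := by positivity
  have hWabs : ∫ ω, |W ω| ≤ 2 * R / Real.sqrt k := by
    have hpt : ∀ ω, |W ω| ≤ W ω ^ 2 / (2 * t) + t / 2 := by
      intro ω
      have h1 : 0 ≤ (|W ω| - t) ^ 2 := sq_nonneg _
      have h2 : |W ω| ^ 2 = W ω ^ 2 := sq_abs _
      have h3 : 2 * t * |W ω| ≤ W ω ^ 2 + t ^ 2 := by nlinarith
      rw [div_add_div _ _ (by positivity : (2 * t : ℝ) ≠ 0) (two_ne_zero), le_div_iff₀ (by positivity)]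
      nlinarith
    have hint : Integrable (fun ω => W ω ^ 2 / (2 * t) + t / 2) ℙ :=
      (hWsqint.div_const _).add (integrable_const _)
    calc ∫ ω, |W ω| ≤ ∫ ω, (W ω ^ 2 / (2 * t) + t / 2) := integral_mono hWabsint hint hpt
      _ = (∫ ω, W ω ^ 2) / (2 * t) + t / 2 := by
          rw [integral_add (hWsqint.div_const _) (integrable_const _), integral_div,
            integral_const]
          simp
      _ ≤ ((2 * R) ^ 2 / k) / (2 * t) + t / 2 :=
          add_le_add ((div_le_div_iff_of_pos_right (by positivity)).2 hWsq) le_rfl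
      _ = 2 * R / Real.sqrt k := by
          rw [ht]
          exact aux_arith R _ _ hR hsqrtk hsqrtk2
  -- main estimate
  let G : Fin k → Ω → ℝ := fun i ω => (V i ω - Vbar ω) ^ j
  let H : Fin k → Ω → ℝ := fun i ω => (V i ω - μ0) ^ j
  have hG : G = fun i ω => (V i ω - Vbar ω) ^ j := rfl
  have hH : H = fun i ω => (V i ω - μ0) ^ j := rfl
  have hGmeas : ∀ i, Measurable (G i) := fun i => ((hVmeas i).sub hVbarmeas).pow_const j
  have hHmeas : ∀ i, Measurable (H i) := fun i => ((hVmeas i).sub_const μ0).pow_const j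
  have hGbd : ∀ i ω, |G i ω| ≤ (2 * R) ^ j := by
    intro i ω
    rw [hG]
    simp only
    rw [abs_pow]
    refine pow_le_pow_left₀ (abs_nonneg _) ?_ j
    calc |V i ω - Vbar ω| ≤ |V i ω| + |Vbar ω| := abs_sub _ _
      _ ≤ R + R := add_le_add (hVbd i ω) (hVbarbd ω)
      _ = 2 * R := by ring
  have hHbd : ∀ i ω, |H i ω| ≤ (2 * R) ^ j := by
    intro i ω
    rw [hH]
    simp only
    rw [abs_pow]
    refine pow_le_pow_left₀ (abs_nonneg _) ?_ j
    calc |V i ω - μ0| ≤ |V i ω| + |μ0| := abs_sub _ _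
      _ ≤ R + R := add_le_add (hVbd i ω) hμ0bd
      _ = 2 * R := by ring
  have hGint : ∀ i, Integrable (G i) ℙ := fun i => aux_integrable_of_bdd (hGmeas i) (hGbd i)
  have hHint : ∀ i, Integrable (H i) ℙ := fun i => aux_integrable_of_bdd (hHmeas i) (hHbd i)
  have hδ : δ = ∫ ω, H i0 ω := rfl
  have hHδ : ∀ i, ∫ ω, H i ω = δ := by
    intro i
    rw [hδ]
    exact ((hVident i i0).comp ((measurable_id.sub_const μ0).pow_const j)).integral_eq
  have hdhat : ∫ ω, dhat ω = (k : ℝ)⁻¹ * ∑ i, ∫ ω, G i ω := by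
    have : (fun ω => dhat ω) = fun ω => (k : ℝ)⁻¹ * ∑ i, G i ω := rfl
    rw [this, integral_const_mul, integral_finset_sum _ fun i _ => hGint i]
  -- pointwise comparison
  have hGH : ∀ i ω, |G i ω - H i ω| ≤ (j : ℝ) * (2 * R) ^ (j - 1) * |W ω| := by
    intro i ω
    have ha : |V i ω - Vbar ω| ≤ 2 * R := by
      calc |V i ω - Vbar ω| ≤ |V i ω| + |Vbar ω| := abs_sub _ _
        _ ≤ R + R := add_le_add (hVbd i ω) (hVbarbd ω)
        _ = 2 * R := by ring
    have hb : |V i ω - μ0| ≤ 2 * R := by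
      calc |V i ω - μ0| ≤ |V i ω| + |μ0| := abs_sub _ _
        _ ≤ R + R := add_le_add (hVbd i ω) hμ0bd
        _ = 2 * R := by ring
    have := aux_abs_pow_sub_pow (2 * R) (by linarith) j
      (V i ω - Vbar ω) (V i ω - μ0) ha hb
    have hdiff : (V i ω - Vbar ω) - (V i ω - μ0) = -(W ω) := by rw [hW]; ring
    rw [hdiff, abs_neg] at this
    exact this
  have hterm2 : ∀ i, |(∫ ω, G i ω) - ∫ ω, H i ω|
      ≤ (j : ℝ) * (2 * R) ^ (j - 1) * (2 * R / Real.sqrt k) := by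
    intro i
    have h1 : (∫ ω, G i ω) - ∫ ω, H i ω = ∫ ω, (G i ω - H i ω) :=
      (integral_sub (hGint i) (hHint i)).symm
    rw [h1]
    have h2 : |∫ ω, (G i ω - H i ω)| ≤ ∫ ω, |G i ω - H i ω| := by
      simpa [Real.norm_eq_abs] using
        norm_integral_le_integral_norm (μ := (ℙ : Measure Ω)) (fun ω => G i ω - H i ω)
    refine h2.trans ?_
    have h3 : ∫ ω, |G i ω - H i ω| ≤ ∫ ω, (j : ℝ) * (2 * R) ^ (j - 1) * |W ω| := by
      refine integral_mono ((hGint i).sub (hHint i)).abs (hWabsint.const_mul _) ?_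
      intro ω
      exact hGH i ω
    refine h3.trans ?_
    rw [integral_const_mul]
    exact mul_le_mul_of_nonneg_left hWabs (by positivity)
  -- put it together
  have hkey : (∫ ω, dhat ω) - δ = (k : ℝ)⁻¹ * ∑ i, ((∫ ω, G i ω) - ∫ ω, H i ω) := by
    rw [hdhat, Finset.sum_sub_distrib]
    rw [Finset.sum_congr rfl fun i _ => hHδ i, Finset.sum_const, Finset.card_univ,
      Fintype.card_fin, nsmul_eq_mul]
    field_simp
    try ring
  have hmain : |(∫ ω, dhat ω) - δ| ≤ (j : ℝ) * (2 * R) ^ j / Real.sqrt k := by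
    rw [hkey]
    have hj1 : j - 1 + 1 = j := by omega
    calc |(k : ℝ)⁻¹ * ∑ i, ((∫ ω, G i ω) - ∫ ω, H i ω)|
        = (k : ℝ)⁻¹ * |∑ i, ((∫ ω, G i ω) - ∫ ω, H i ω)| := by
          rw [abs_mul, abs_of_nonneg (inv_nonneg.2 hk0.le)]
      _ ≤ (k : ℝ)⁻¹ * ∑ i : Fin k, |(∫ ω, G i ω) - ∫ ω, H i ω| :=
          mul_le_mul_of_nonneg_left (Finset.abs_sum_le_sum_abs _ _) (inv_nonneg.2 hk0.le)
      _ ≤ (k : ℝ)⁻¹ * ∑ _i : Fin k, (j : ℝ) * (2 * R) ^ (j - 1) * (2 * R / Real.sqrt k) :=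
          mul_le_mul_of_nonneg_left (Finset.sum_le_sum fun i _ => hterm2 i)
            (inv_nonneg.2 hk0.le)
      _ = (k : ℝ)⁻¹ * ((k : ℝ) * ((j : ℝ) * (2 * R) ^ (j - 1) * (2 * R / Real.sqrt k))) := by
          rw [Finset.sum_const, Finset.card_univ, Fintype.card_fin, nsmul_eq_mul]
      _ = (j : ℝ) * ((2 * R) ^ (j - 1) * (2 * R)) / Real.sqrt k := by field_simp
      _ = (j : ℝ) * (2 * R) ^ j / Real.sqrt k := by
          rw [← pow_succ, hj1]
  refine hmain.trans ?_
  -- final numeric comparison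
  rw [div_le_div_iff₀ hsqrtk hsqrtk]
  have h2R : (2 * R) ^ j = 4 ^ j * (Δ : ℝ) ^ j * M ^ j := by
    rw [hRdef]
    rw [show (2 : ℝ) * (2 * (Δ : ℝ) * M) = 4 * (Δ : ℝ) * M by ring]
    rw [mul_pow, mul_pow]
  have hfinal : (j : ℝ) * (2 * R) ^ j ≤ ((j : ℝ) + 1) * 4 ^ j * M ^ (2 * j) * (Δ : ℝ) ^ (j + 1) := by
    rw [h2R]
    have hMj : M ^ j ≤ M ^ (2 * j) := pow_le_pow_right₀ hM (by omega)
    have hΔj : (Δ : ℝ) ^ j ≤ (Δ : ℝ) ^ (j + 1) := pow_le_pow_right₀ hΔ1 (by omega)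
    have hjj : (j : ℝ) ≤ (j : ℝ) + 1 := by linarith
    calc (j : ℝ) * (4 ^ j * (Δ : ℝ) ^ j * M ^ j)
        ≤ ((j : ℝ) + 1) * (4 ^ j * (Δ : ℝ) ^ (j + 1) * M ^ (2 * j)) := by
          refine mul_le_mul hjj ?_ (by positivity) (by positivity)
          refine mul_le_mul (mul_le_mul_of_nonneg_left hΔj (by positivity)) hMj
            (by positivity) (by positivity)
      _ = ((j : ℝ) + 1) * 4 ^ j * M ^ (2 * j) * (Δ : ℝ) ^ (j + 1) := by ring
  calc (j : ℝ) * (2 * R) ^ j * Real.sqrt k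
      ≤ (((j : ℝ) + 1) * 4 ^ j * M ^ (2 * j) * (Δ : ℝ) ^ (j + 1)) * Real.sqrt k :=
        mul_le_mul_of_nonneg_right hfinal hsqrtk.le
    _ = ((j : ℝ) + 1) * 4 ^ j * M ^ (2 * j) * (Δ : ℝ) ^ (j + 1) * Real.sqrt k := by
        ring
end

section
/- Let 0 < θ̲ < θ̄ and ε > 0, and let θ ∈ [θ̲, θ̄]. Suppose ŵ ∈ ℝ satisfies |ŵ − θ²/12| ≤ ε θ̲²/12 (note θ²/12 is the variance of the uniform distribution on [0, θ]). Define θ̂ = √(min(max(12 ŵ, θ̲²), θ̄²)). Then |θ − θ̂| ≤ ε θ̲ / 2, and the L¹ distance between the densities of the uniform distributions on [0, θ] and [0, θ̂] satisfies ∫₀^∞ |θ^{-1}·1_{[0,θ]}(x) − θ̂^{-1}·1_{[0,θ̂]}(x)| dx ≤ ε. (Hence the family of uniform distributions on [0, θ], θ ∈ [θ̲, θ̄], is (ε, 2)-regular for every ε > 0.) -/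
open MeasureTheory

lemma clamp_close {x y lo hi : ℝ} (hy1 : lo ≤ y) (hy2 : y ≤ hi) :
    |min (max x lo) hi - y| ≤ |x - y| := by
  rcases le_total x lo with h | h
  · rw [max_eq_right h, min_eq_left (hy1.trans hy2)]
    rw [abs_of_nonpos (by linarith), abs_of_nonpos (by linarith)]
    linarith
  · rw [max_eq_left h]
    rcases le_total x hi with h2 | h2
    · rw [min_eq_left h2]
    · rw [min_eq_right h2, abs_of_nonneg (by linarith), abs_of_nonneg (by linarith)]
      linarith

lemma L1calc {a b : ℝ} (ha : 0 < a) (hab : a ≤ b) :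
    (∫ x in Set.Ici (0 : ℝ),
        |Set.indicator (Set.Icc (0 : ℝ) a) (fun _ => a⁻¹) x
          - Set.indicator (Set.Icc (0 : ℝ) b) (fun _ => b⁻¹) x|) = 2 * (b - a) / b := by
  have hb : 0 < b := ha.trans_le hab
  have key : ∀ x : ℝ,
      |Set.indicator (Set.Icc (0 : ℝ) a) (fun _ => a⁻¹) x
        - Set.indicator (Set.Icc (0 : ℝ) b) (fun _ => b⁻¹) x|
      = Set.indicator (Set.Icc (0 : ℝ) a) (fun _ => a⁻¹ - b⁻¹) x
        + Set.indicator (Set.Ioc a b) (fun _ => b⁻¹) x := by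
    intro x
    by_cases h1 : x ∈ Set.Icc (0:ℝ) a
    · have h2 : x ∈ Set.Icc (0:ℝ) b := ⟨h1.1, h1.2.trans hab⟩
      have h3 : x ∉ Set.Ioc a b := fun h => absurd h1.2 (not_le.2 h.1)
      have hinv : b⁻¹ ≤ a⁻¹ := inv_anti₀ ha hab
      simp [h1, h2, h3, abs_of_nonneg (sub_nonneg.2 hinv)]
    · by_cases h2 : x ∈ Set.Icc (0:ℝ) b
      · have h3 : x ∈ Set.Ioc a b := ⟨lt_of_not_ge (fun h => h1 ⟨h2.1, h⟩), h2.2⟩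
        simp [h1, h2, h3, abs_of_nonneg (inv_nonneg.2 hb.le)]
      · have h3 : x ∉ Set.Ioc a b := fun h => h2 ⟨(ha.trans h.1).le, h.2⟩
        simp [h1, h2, h3]
  simp only [key]
  have hi1 : Integrable (Set.indicator (Set.Icc (0:ℝ) a) (fun _ => a⁻¹ - b⁻¹))
      (volume.restrict (Set.Ici (0:ℝ))) := by
    rw [integrable_indicator_iff measurableSet_Icc]
    exact integrableOn_const (lt_of_le_of_lt
      (Measure.restrict_apply_le _ _) measure_Icc_lt_top).ne
  have hi2 : Integrable (Set.indicator (Set.Ioc a b) (fun _ => b⁻¹))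
      (volume.restrict (Set.Ici (0:ℝ))) := by
    rw [integrable_indicator_iff measurableSet_Ioc]
    exact integrableOn_const (lt_of_le_of_lt
      (Measure.restrict_apply_le _ _) measure_Ioc_lt_top).ne
  rw [integral_add hi1 hi2]
  rw [setIntegral_indicator measurableSet_Icc, setIntegral_indicator measurableSet_Ioc]
  have e1 : Set.Ici (0:ℝ) ∩ Set.Icc 0 a = Set.Icc 0 a := by
    ext x; simp +contextual [Set.mem_Icc, and_assoc]
  have e2 : Set.Ici (0:ℝ) ∩ Set.Ioc a b = Set.Ioc a b := by
    ext x
    simp only [Set.mem_inter_iff, Set.mem_Ici, Set.mem_Ioc]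
    exact ⟨fun h => h.2, fun h => ⟨(ha.trans h.1).le, h⟩⟩
  rw [e1, e2, setIntegral_const, setIntegral_const, measureReal_def, measureReal_def, Real.volume_Icc, Real.volume_Ioc]
  rw [ENNReal.toReal_ofReal (by linarith), ENNReal.toReal_ofReal (by linarith)]
  simp only [smul_eq_mul, sub_zero]
  field_simp
  ring

/-- `(ε, 2)`-regularity of the family of uniform distributions on
`[0, θ]`, `θ ∈ [θ̲, θ̄]`: if `ŵ` estimates the variance `θ²/12` within
`ε θ̲²/12`, then `θ̂ = √(min(max(12ŵ, θ̲²), θ̄²))` satisfies `|θ − θ̂| ≤ ε θ̲/2`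
and the `L¹` distance between the uniform densities on `[0,θ]` and `[0,θ̂]`
is at most `ε`. -/
theorem uniform_family_regular (θlow θhigh ε : ℝ) (h0 : 0 < θlow)
    (hlh : θlow < θhigh) (hε : 0 < ε)
    (θ : ℝ) (hθ : θ ∈ Set.Icc θlow θhigh)
    (what : ℝ) (hwhat : |what - θ ^ 2 / 12| ≤ ε * θlow ^ 2 / 12) :
    |θ - Real.sqrt (min (max (12 * what) (θlow ^ 2)) (θhigh ^ 2))| ≤ ε * θlow / 2 ∧
    (∫ x in Set.Ici (0 : ℝ),
        |Set.indicator (Set.Icc (0 : ℝ) θ) (fun _ => θ⁻¹) x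
          - Set.indicator
              (Set.Icc (0 : ℝ) (Real.sqrt (min (max (12 * what) (θlow ^ 2)) (θhigh ^ 2))))
              (fun _ => (Real.sqrt (min (max (12 * what) (θlow ^ 2)) (θhigh ^ 2)))⁻¹) x|)
      ≤ ε := by
  obtain ⟨hθl, hθh⟩ := hθ
  set c : ℝ := min (max (12 * what) (θlow ^ 2)) (θhigh ^ 2) with hc
  set t : ℝ := Real.sqrt c with ht
  have hθpos : 0 < θ := h0.trans_le hθl
  have hsq1 : θlow ^ 2 ≤ θ ^ 2 := by nlinarith
  have hsq2 : θ ^ 2 ≤ θhigh ^ 2 := by nlinarith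
  have hclose : |c - θ ^ 2| ≤ ε * θlow ^ 2 := by
    have := clamp_close (x := 12 * what) hsq1 hsq2
    have h12 : |12 * what - θ ^ 2| ≤ ε * θlow ^ 2 := by
      have he : 12 * what - θ ^ 2 = 12 * (what - θ ^ 2 / 12) := by ring
      rw [he, abs_mul, abs_of_nonneg (by norm_num : (0:ℝ) ≤ 12)]
      linarith
    exact le_trans (clamp_close hsq1 hsq2) h12
  have hcl : θlow ^ 2 ≤ c := le_min (le_max_right _ _) (by nlinarith)
  have hch : c ≤ θhigh ^ 2 := min_le_right _ _
  have hcpos : 0 < c := lt_of_lt_of_le (by positivity) hcl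
  have htl : θlow ≤ t := by
    rw [ht]
    calc θlow = Real.sqrt (θlow ^ 2) := (Real.sqrt_sq h0.le).symm
    _ ≤ Real.sqrt c := Real.sqrt_le_sqrt hcl
  have htpos : 0 < t := h0.trans_le htl
  have htsq : t ^ 2 = c := Real.sq_sqrt hcpos.le
  -- first part
  have habs : |θ - t| * (θ + t) ≤ ε * θlow ^ 2 := by
    have : |θ - t| * (θ + t) = |θ ^ 2 - c| := by
      rw [← htsq, ← abs_of_nonneg (by linarith : (0:ℝ) ≤ θ + t), ← abs_mul]
      ring_nf
    rw [this, abs_sub_comm]; exact hclose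
  have hsum : 2 * θlow ≤ θ + t := by linarith
  have part1 : |θ - t| ≤ ε * θlow / 2 := by
    nlinarith [abs_nonneg (θ - t), mul_le_mul_of_nonneg_left hsum (abs_nonneg (θ - t))]
  refine ⟨part1, ?_⟩
  -- second part
  rcases le_total θ t with hor | hor
  · rw [L1calc hθpos hor]
    rw [div_le_iff₀ htpos]
    have : t - θ ≤ ε * θlow / 2 := by
      rw [abs_sub_comm] at part1
      exact le_trans (le_abs_self _) part1
    nlinarith
  · have hflip : (∫ x in Set.Ici (0 : ℝ),
        |Set.indicator (Set.Icc (0 : ℝ) θ) (fun _ => θ⁻¹) x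
          - Set.indicator (Set.Icc (0 : ℝ) t) (fun _ => t⁻¹) x|)
        = ∫ x in Set.Ici (0 : ℝ),
        |Set.indicator (Set.Icc (0 : ℝ) t) (fun _ => t⁻¹) x
          - Set.indicator (Set.Icc (0 : ℝ) θ) (fun _ => θ⁻¹) x| := by
      congr 1; funext x; rw [abs_sub_comm]
    rw [hflip, L1calc htpos hor]
    rw [div_le_iff₀ hθpos]
    have : θ - t ≤ ε * θlow / 2 := le_trans (le_abs_self _) part1
    nlinarith
end
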